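/- arXiv:1711.01449 — 2 statements merged into one kernel-verified Lean document; each statement's English description precedes it below -/
import Mathlib

section
/- For the function ρ(x) = 1 − min(x, 1/e)^{min(x, 1/e)} defined for x ≥ 0, ρ is nondecreasing, continuous, concave, ρ(0) = 0, and ∫_{0^+} dx/ρ(x) = ∞ (i.e., for every ε > 0 the integral ∫_0^ε dx/ρ(x) diverges). -/
/-!
For `m ≥ 0` we have `m ^ m = exp (-negMulLog m)`, so `ρ = φ ∘ negMulLog ∘ min (·) e⁻¹` with
`φ t = 1 - exp (-t)` concave and increasing. Since `negMulLog` is concave on `[0, ∞)` and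
increasing on `[0, e⁻¹]` (its derivative is `-log m - 1`), and `min (·) e⁻¹` is concave with
values in `[0, e⁻¹]`, `ρ` is monotone and concave. Near `0⁺`, `ρ x = φ (negMulLog x) ≤ negMulLog x`,
and `(negMulLog x)⁻¹ = -(d/dx) log (-log x)` with `log (-log x) → ∞`, so `1 / ρ` is not
integrable at `0`.
-/

open MeasureTheory Set

open Filter Topology Asymptotics Real

theorem ConcaveOn.comp_of_mapsTo {E : Type*} [AddCommGroup E] [Module ℝ E] {s : Set E}
    {t : Set ℝ} {f : E → ℝ} {g : ℝ → ℝ} (hg : ConcaveOn ℝ t g) (hf : ConcaveOn ℝ s f)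
    (hg' : MonotoneOn g t) (hst : MapsTo f s t) : ConcaveOn ℝ s (g ∘ f) :=
  ⟨hf.1, fun _ hx _ hy _ _ ha hb hab =>
    (hg.2 (hst hx) (hst hy) ha hb hab).trans <|
      hg' (hg.1 (hst hx) (hst hy) ha hb hab) (hst <| hf.1 hx hy ha hb hab) (hf.2 hx hy ha hb hab)⟩

namespace Real

lemma rpow_self_eq_exp_neg_negMulLog {x : ℝ} (hx : 0 ≤ x) : x ^ x = exp (-negMulLog x) := by
  rcases hx.eq_or_lt with rfl | hx
  · simp
  · rw [rpow_def_of_pos hx, negMulLog, neg_mul, neg_neg, mul_comm]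

lemma negMulLog_pos {x : ℝ} (h0 : 0 < x) (h1 : x < 1) : 0 < negMulLog x := by
  simpa only [negMulLog_eq_neg, neg_pos] using mul_log_neg h0 h1

lemma monotoneOn_negMulLog : MonotoneOn negMulLog (Icc 0 (exp 1)⁻¹) := by
  refine monotoneOn_of_deriv_nonneg (convex_Icc _ _) continuous_negMulLog.continuousOn
    (differentiableOn_negMulLog.mono ?_) fun x hx => ?_ <;> rw [interior_Icc] at *
  · exact fun x hx => hx.1.ne'
  · have : log x < -1 := by simpa only [log_inv, log_exp] using log_lt_log hx.1 hx.2
    rw [deriv_negMulLog hx.1.ne']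
    linarith

lemma monotoneOn_negMulLog_min : MonotoneOn (fun x => negMulLog (min x (exp 1)⁻¹)) (Ici 0) :=
  fun x hx y hy hxy => monotoneOn_negMulLog ⟨le_min hx (by positivity), min_le_right _ _⟩
    ⟨le_min hy (by positivity), min_le_right _ _⟩ (min_le_min_right _ hxy)

lemma concaveOn_negMulLog_min : ConcaveOn ℝ (Ici 0) fun x => negMulLog (min x (exp 1)⁻¹) :=
  ConcaveOn.comp_of_mapsTo (concaveOn_negMulLog.subset Icc_subset_Ici_self (convex_Icc _ _))
    ((concaveOn_id (convex_Ici 0)).inf (concaveOn_const _ (convex_Ici 0))) monotoneOn_negMulLog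
    fun x hx => ⟨le_min hx (by positivity), min_le_right _ _⟩

lemma monotone_one_sub_exp_neg : Monotone fun t : ℝ => 1 - exp (-t) := fun _ _ hab =>
  sub_le_sub_left (exp_le_exp.2 (neg_le_neg hab)) 1

lemma concaveOn_one_sub_exp_neg : ConcaveOn ℝ univ fun t : ℝ => 1 - exp (-t) :=
  ((convexOn_exp.comp_linearMap (-LinearMap.id)).neg.add_const 1).congr fun t _ => by
    simp [sub_eq_neg_add]

lemma one_sub_exp_neg_le_self (t : ℝ) : 1 - exp (-t) ≤ t := by
  linarith [one_sub_le_exp_neg t]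

lemma one_sub_exp_neg_pos {t : ℝ} (ht : 0 < t) : 0 < 1 - exp (-t) := by
  linarith [exp_lt_one_iff.2 (neg_lt_zero.2 ht)]

lemma not_integrableOn_Ioc_of_inv_negMulLog_isBigO {E : Type*} [NormedAddCommGroup E]
    {g : ℝ → E} {ε : ℝ} (hε : 0 < ε) (hg : (fun x => (negMulLog x)⁻¹) =O[𝓝[>] 0] g) :
    ¬IntegrableOn g (Ioc 0 ε) := by
  have hderiv : ∀ᶠ x in 𝓝[>] (0 : ℝ),
      HasDerivAt (fun x => log (-log x)) (-(negMulLog x)⁻¹) x := by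
    filter_upwards [Ioo_mem_nhdsGT one_pos] with x ⟨hx0, hx1⟩
    convert ((hasDerivAt_log hx0.ne').neg.log (neg_pos.2 (log_neg hx0 hx1)).ne') using 1
    · rfl
    · simp only [Pi.neg_apply, negMulLog]
      field_simp
  refine not_integrableOn_of_tendsto_norm_atTop_of_deriv_isBigO_filter (𝓝[>] 0)
    (Ioc_mem_nhdsGT hε) (hderiv.mono fun x hx => hx.differentiableAt) ?_ ?_
  · exact tendsto_norm_atTop_atTop.comp <| tendsto_log_atTop.comp <|
      tendsto_neg_atBot_atTop.comp tendsto_log_nhdsGT_zero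
  · refine (IsBigO.of_bound' ?_).trans hg
    filter_upwards [hderiv] with x hx
    rw [hx.deriv, norm_neg]

end Real

/-- Properties of `ρ(x) = 1 - m^m` with `m = min(x, 1/e)` (real power,
with `0^0 = 1` so that `ρ 0 = 0`): `ρ` is nondecreasing, continuous and
concave on `[0,∞)`, `ρ 0 = 0`, and `∫_0^ε dx / ρ(x) = ∞` for every `ε > 0`
(expressed as non-integrability of `1/ρ` on `(0,ε]`). -/
theorem rho_example_properties :
    ∀ ρ : ℝ → ℝ,
      (∀ x, ρ x = 1 - (min x (Real.exp 1)⁻¹) ^ (min x (Real.exp 1)⁻¹)) →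
      MonotoneOn ρ (Ici (0 : ℝ)) ∧
      ContinuousOn ρ (Ici (0 : ℝ)) ∧
      ConcaveOn ℝ (Ici (0 : ℝ)) ρ ∧
      ρ 0 = 0 ∧
      ∀ ε > (0 : ℝ), ¬ IntegrableOn (fun x => 1 / ρ x) (Ioc (0 : ℝ) ε) := by
  intro ρ hρ
  have hρ_eq : EqOn (fun x => 1 - exp (-negMulLog (min x (exp 1)⁻¹))) ρ (Ici 0) := fun x hx => by
    rw [hρ, rpow_self_eq_exp_neg_negMulLog (le_min hx (by positivity))]
  refine ⟨(monotone_one_sub_exp_neg.comp_monotoneOn monotoneOn_negMulLog_min).congr hρ_eq,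
    (by fun_prop : Continuous fun x => 1 - exp (-negMulLog (min x (exp 1)⁻¹))).continuousOn.congr
      hρ_eq.symm,
    (concaveOn_one_sub_exp_neg.comp_of_mapsTo concaveOn_negMulLog_min
      (monotone_one_sub_exp_neg.monotoneOn _) (mapsTo_univ _ _)).congr hρ_eq,
    by rw [hρ, min_eq_left (by positivity), rpow_zero, sub_self],
    fun ε hε => not_integrableOn_Ioc_of_inv_negMulLog_isBigO hε ?_⟩
  refine IsBigO.of_bound' ?_
  filter_upwards [Ioo_mem_nhdsGT (by positivity : (0 : ℝ) < (exp 1)⁻¹)] with x ⟨hx0, hxc⟩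
  have hx1 : x < 1 := hxc.trans (inv_lt_one_of_one_lt₀ (one_lt_exp_iff.2 one_pos))
  have hH : 0 < negMulLog x := negMulLog_pos hx0 hx1
  have hρx : ρ x = 1 - exp (-negMulLog x) := by
    rw [← hρ_eq hx0.le]; simp only [min_eq_left hxc.le]
  rw [hρx, one_div, norm_inv, norm_inv, norm_of_nonneg hH.le,
    norm_of_nonneg (one_sub_exp_neg_pos hH).le]
  exact inv_anti₀ (one_sub_exp_neg_pos hH) (one_sub_exp_neg_le_self _)
end

section
/- There exists a nondecreasing, continuous, concave function ρ : [0,∞) → [0,∞) with ρ(0) = 0 and ∫_0^1 dx/ρ(x) = ∞ such that limsup_{x ↓ 0} ρ(x²)/x > 0; in fact one can achieve limsup_{x↓0} ρ(x)/√x = 1. -/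
/-!
Take nodes `b n ↓ 0` and let `ρ` be the infimum of the chords of `√` over the intervals
`[b (n + 1) ^ 2, b n ^ 2]`. Since `√` is concave, this is the piecewise-linear interpolation of `√`
at the nodes `b n ^ 2`: an infimum of increasing affine maps, hence monotone and concave, lying
below `√` and touching it at every node, so that `limsup ρ x / √x = 1`. On the `n`-th interval `ρ`
is the chord `(x + b n * b (n + 1)) / (b n + b (n + 1))`, and `1 / ρ` integrates there to
`(b n + b (n + 1)) * log (b n / b (n + 1))`. The recursion `b (n + 1) = b n * exp (-1 / b n)`
makes this at least `1` for every `n`, so `1 / ρ` is not integrable near `0`.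
-/

open MeasureTheory Set Filter Topology Real Function

theorem ConcaveOn.ciInf {E ι : Type*} [AddCommMonoid E] [SMul ℝ E] [Nonempty ι] {s : Set E}
    {f : ι → E → ℝ} (hf : ∀ i, ConcaveOn ℝ s (f i))
    (hbdd : ∀ x ∈ s, BddBelow (range fun i => f i x)) :
    ConcaveOn ℝ s fun x => ⨅ i, f i x := by
  refine ⟨(hf (Classical.arbitrary ι)).1, fun x hx y hy a b ha hb hab => le_ciInf fun i => ?_⟩
  show a • (⨅ i, f i x) + b • (⨅ i, f i y) ≤ f i (a • x + b • y)
  calc a • (⨅ i, f i x) + b • (⨅ i, f i y) ≤ a • f i x + b • f i y := by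
        gcongr
        exacts [ciInf_le (hbdd x hx) i, ciInf_le (hbdd y hy) i]
    _ ≤ f i (a • x + b • y) := (hf i).2 hx hy ha hb hab

theorem not_integrableOn_of_le_setIntegral {α : Type*} [MeasurableSpace α] {μ : Measure α}
    {f : α → ℝ} {s : Set α} {t : ℕ → Set α} {c : ℝ} (hc : 0 < c)
    (ht : ∀ n, MeasurableSet (t n)) (hdisj : Pairwise (Disjoint on t)) (hts : ∀ n, t n ⊆ s)
    (hle : ∀ n, c ≤ ∫ x in t n, f x ∂μ) : ¬ IntegrableOn f s μ := by
  intro hf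
  have hsum := (hasSum_integral_iUnion ht hdisj (hf.mono_set (iUnion_subset hts))).summable
  have hlim := hsum.tendsto_atTop_zero.eventually (gt_mem_nhds hc)
  obtain ⟨n, hn⟩ := hlim.exists
  exact (hle n).not_gt hn

theorem exists_mem_Ioc_of_tendsto_zero {a : ℕ → ℝ} (ha : Tendsto a atTop (𝓝 0)) {x : ℝ}
    (hx : 0 < x) (hx0 : x ≤ a 0) : ∃ n, x ∈ Ioc (a (n + 1)) (a n) := by
  classical
  have hex : ∃ n, a n < x := (ha.eventually (gt_mem_nhds hx)).exists
  obtain ⟨n, hn⟩ : ∃ n, Nat.find hex = n + 1 :=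
    Nat.exists_eq_add_one.mpr (Nat.pos_of_ne_zero fun h => (h ▸ Nat.find_spec hex).not_ge hx0)
  exact ⟨n, hn ▸ Nat.find_spec hex, not_lt.mp (Nat.find_min hex (hn ▸ n.lt_succ_self))⟩

theorem limsup_eq_of_eventually_le_of_frequently_ge {α : Type*} {l : Filter α} {f : α → ℝ}
    {c : ℝ} (hle : ∀ᶠ x in l, f x ≤ c) (hge : ∃ᶠ x in l, c ≤ f x) : limsup f l = c :=
  le_antisymm (limsup_le_of_le (IsCoboundedUnder.of_frequently_ge hge) hle)
    (le_limsup_of_frequently_le hge (isBoundedUnder_of_eventually_le hle))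

/-- The chord of `√` through `(u ^ 2, u)` and `(v ^ 2, v)`. -/
noncomputable def sqrtSecant (u v x : ℝ) : ℝ := (u + v)⁻¹ * (x + u * v)

section sqrtSecant

variable {u v x : ℝ}

theorem sqrtSecant_sub_sqrt (huv : u + v ≠ 0) (hx : 0 ≤ x) :
    sqrtSecant u v x - √x = (u + v)⁻¹ * ((√x - u) * (√x - v)) := by
  have hsq : √x ^ 2 = x := sq_sqrt hx
  rw [sqrtSecant]
  field_simp
  linear_combination -hsq

theorem sqrt_le_sqrtSecant (hu : 0 < u) (huv : u ≤ v) (hx : 0 ≤ x) (h : √x ≤ u ∨ v ≤ √x) :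
    √x ≤ sqrtSecant u v x := by
  have h0 : 0 < u + v := by linarith
  have hprod : 0 ≤ (√x - u) * (√x - v) := by
    rcases h with h | h
    · exact mul_nonneg_of_nonpos_of_nonpos (by linarith) (by linarith)
    · exact mul_nonneg (by linarith) (by linarith)
  have := sqrtSecant_sub_sqrt h0.ne' hx
  nlinarith [mul_nonneg (inv_pos.mpr h0).le hprod]

theorem sqrtSecant_le_sqrt (hu : 0 < u) (hx : 0 ≤ x) (hux : u ≤ √x) (hxv : √x ≤ v) :
    sqrtSecant u v x ≤ √x := by
  have h0 : 0 < u + v := by linarith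
  have hprod : (√x - u) * (√x - v) ≤ 0 := mul_nonpos_of_nonneg_of_nonpos (by linarith) (by linarith)
  have := sqrtSecant_sub_sqrt h0.ne' hx
  nlinarith [mul_nonpos_of_nonneg_of_nonpos (inv_pos.mpr h0).le hprod]

theorem sqrtSecant_sq_left (huv : u + v ≠ 0) : sqrtSecant u v (u ^ 2) = u := by
  rw [sqrtSecant]; field_simp

theorem sqrtSecant_sq_right (huv : u + v ≠ 0) : sqrtSecant u v (v ^ 2) = v := by
  rw [sqrtSecant]; field_simp; ring

theorem sqrtSecant_nonneg (hu : 0 ≤ u) (hv : 0 ≤ v) (hx : 0 ≤ x) : 0 ≤ sqrtSecant u v x := by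
  unfold sqrtSecant; positivity

theorem monotone_sqrtSecant (huv : 0 ≤ u + v) : Monotone (sqrtSecant u v) := fun x y hxy => by
  unfold sqrtSecant; gcongr

theorem concaveOn_sqrtSecant (huv : 0 ≤ u + v) : ConcaveOn ℝ univ (sqrtSecant u v) :=
  ((concaveOn_id convex_univ).add_const (u * v)).smul (inv_nonneg.mpr huv)

theorem integral_inv_sqrtSecant (hu : 0 < u) (hv : 0 < v) :
    ∫ x in u ^ 2..v ^ 2, (sqrtSecant u v x)⁻¹ = (u + v) * log (v / u) := by
  have h0 : u + v ≠ 0 := by positivity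
  simp only [sqrtSecant, mul_inv, inv_inv, intervalIntegral.integral_const_mul,
    intervalIntegral.integral_comp_add_right (fun x => x⁻¹)]
  rw [integral_inv_of_pos (by positivity) (by positivity)]
  congr 2
  field_simp
  ring

end sqrtSecant

noncomputable def sqrtInterp (b : ℕ → ℝ) (x : ℝ) : ℝ := ⨅ n, sqrtSecant (b (n + 1)) (b n) x

section sqrtInterp

variable {b : ℕ → ℝ} {x : ℝ}

theorem bddBelow_range_sqrtSecant (hpos : ∀ n, 0 < b n) (hx : 0 ≤ x) :
    BddBelow (range fun n => sqrtSecant (b (n + 1)) (b n) x) :=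
  ⟨0, forall_mem_range.mpr fun n => sqrtSecant_nonneg (hpos _).le (hpos n).le hx⟩

theorem sqrtInterp_nonneg (hpos : ∀ n, 0 < b n) (hx : 0 ≤ x) : 0 ≤ sqrtInterp b x :=
  le_ciInf fun n => sqrtSecant_nonneg (hpos _).le (hpos n).le hx

theorem sqrtInterp_eq_sqrtSecant (hb : Antitone b) (hpos : ∀ n, 0 < b n) {n : ℕ}
    (hx : x ∈ Icc (b (n + 1) ^ 2) (b n ^ 2)) :
    sqrtInterp b x = sqrtSecant (b (n + 1)) (b n) x := by
  have hx0 : 0 ≤ x := (sq_nonneg _).trans hx.1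
  have hlo : b (n + 1) ≤ √x := by simpa [sqrt_sq (hpos _).le] using sqrt_le_sqrt hx.1
  have hhi : √x ≤ b n := by simpa [sqrt_sq (hpos _).le] using sqrt_le_sqrt hx.2
  have hbelow := sqrtSecant_le_sqrt (hpos _) hx0 hlo hhi
  refine le_antisymm (ciInf_le (bddBelow_range_sqrtSecant hpos hx0) n) (le_ciInf fun m => ?_)
  -- for `m ≠ n`, `√x` lies outside `[b (m + 1), b m]`, so the `m`-th chord is above `√` at `x`
  rcases lt_trichotomy m n with hmn | rfl | hmn
  · exact hbelow.trans <| sqrt_le_sqrtSecant (hpos _) (hb m.le_succ) hx0 <|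
      Or.inl (hhi.trans (hb hmn))
  · rfl
  · exact hbelow.trans <| sqrt_le_sqrtSecant (hpos _) (hb m.le_succ) hx0 <|
      Or.inr ((hb hmn).trans hlo)

theorem sqrtInterp_sq (hb : Antitone b) (hpos : ∀ n, 0 < b n) (n : ℕ) :
    sqrtInterp b (b n ^ 2) = b n := by
  rw [sqrtInterp_eq_sqrtSecant hb hpos (n := n) ⟨pow_le_pow_left₀ (hpos _).le (hb n.le_succ) 2,
    le_rfl⟩, sqrtSecant_sq_right (by linarith [hpos n, hpos (n + 1)])]

theorem sqrtInterp_zero (hpos : ∀ n, 0 < b n) (hlim : Tendsto b atTop (𝓝 0)) :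
    sqrtInterp b 0 = 0 := by
  refine le_antisymm (ge_of_tendsto' (hlim.comp (tendsto_add_atTop_nat 1)) fun n => ?_)
    (sqrtInterp_nonneg hpos le_rfl)
  have hsum : b (n + 1) + b n ≠ 0 := by linarith [hpos n, hpos (n + 1)]
  calc sqrtInterp b 0 ≤ sqrtSecant (b (n + 1)) (b n) 0 :=
        ciInf_le (bddBelow_range_sqrtSecant hpos le_rfl) n
    _ ≤ sqrtSecant (b (n + 1)) (b n) (b (n + 1) ^ 2) :=
        monotone_sqrtSecant (by linarith [hpos n, hpos (n + 1)]) (sq_nonneg _)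
    _ = b (n + 1) := sqrtSecant_sq_left hsum

theorem sqrtInterp_le_sqrt (hb : Antitone b) (hpos : ∀ n, 0 < b n)
    (hlim : Tendsto b atTop (𝓝 0)) (hx : x ∈ Icc 0 (b 0 ^ 2)) : sqrtInterp b x ≤ √x := by
  rcases hx.1.eq_or_lt with rfl | hx0
  · rw [sqrtInterp_zero hpos hlim, sqrt_zero]
  have hlim2 : Tendsto (fun n => b n ^ 2) atTop (𝓝 0) := by simpa using hlim.pow 2
  obtain ⟨n, hn⟩ := exists_mem_Ioc_of_tendsto_zero hlim2 hx0 hx.2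
  rw [sqrtInterp_eq_sqrtSecant hb hpos (Ioc_subset_Icc_self hn)]
  refine sqrtSecant_le_sqrt (hpos _) hx0.le ?_ ?_
  · simpa [sqrt_sq (hpos _).le] using sqrt_le_sqrt hn.1.le
  · simpa [sqrt_sq (hpos _).le] using sqrt_le_sqrt hn.2

theorem monotoneOn_sqrtInterp (hpos : ∀ n, 0 < b n) : MonotoneOn (sqrtInterp b) (Ici 0) :=
  fun _ hx _ _ hxy => ciInf_mono (bddBelow_range_sqrtSecant hpos hx) fun n =>
    monotone_sqrtSecant (by linarith [hpos n, hpos (n + 1)]) hxy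

theorem concaveOn_sqrtInterp (hpos : ∀ n, 0 < b n) : ConcaveOn ℝ (Ici 0) (sqrtInterp b) :=
  ConcaveOn.ciInf (fun n => (concaveOn_sqrtSecant (by linarith [hpos n, hpos (n + 1)])).subset
    (subset_univ _) (convex_Ici 0)) fun _ hx => bddBelow_range_sqrtSecant hpos hx

theorem continuousOn_sqrtInterp (hb : Antitone b) (hpos : ∀ n, 0 < b n)
    (hlim : Tendsto b atTop (𝓝 0)) : ContinuousOn (sqrtInterp b) (Ici 0) := by
  refine (concaveOn_sqrtInterp hpos).continuousOn_Ici ?_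
  rw [ContinuousWithinAt, sqrtInterp_zero hpos hlim]
  have hsqrt : Tendsto (√·) (𝓝[≥] 0) (𝓝 0) :=
    (continuous_sqrt.tendsto' 0 0 sqrt_zero).mono_left nhdsWithin_le_nhds
  refine tendsto_of_tendsto_of_tendsto_of_le_of_le' tendsto_const_nhds hsqrt
    (eventually_nhdsWithin_of_forall fun _ hx => sqrtInterp_nonneg hpos hx) ?_
  filter_upwards [Icc_mem_nhdsGE (pow_pos (hpos 0) 2)] with x hx
  exact sqrtInterp_le_sqrt hb hpos hlim hx

theorem limsup_sqrtInterp_div_sqrt (hb : Antitone b) (hpos : ∀ n, 0 < b n)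
    (hlim : Tendsto b atTop (𝓝 0)) :
    limsup (fun x => sqrtInterp b x / √x) (𝓝[>] 0) = 1 := by
  refine limsup_eq_of_eventually_le_of_frequently_ge ?_ ?_
  · filter_upwards [Ioc_mem_nhdsGT (pow_pos (hpos 0) 2)] with x hx
    rw [div_le_one (sqrt_pos.mpr hx.1)]
    exact sqrtInterp_le_sqrt hb hpos hlim (Ioc_subset_Icc_self hx)
  · have hnodes : Tendsto (fun n => b n ^ 2) atTop (𝓝[>] 0) :=
      tendsto_nhdsWithin_of_tendsto_nhds_of_eventually_within _ (by simpa using hlim.pow 2)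
        (Eventually.of_forall fun n => pow_pos (hpos n) 2)
    refine hnodes.frequently (Frequently.of_forall fun n => ?_)
    rw [sqrtInterp_sq hb hpos, sqrt_sq (hpos n).le, div_self (hpos n).ne']

theorem setIntegral_one_div_sqrtInterp (hb : Antitone b) (hpos : ∀ n, 0 < b n) (n : ℕ) :
    ∫ x in Ioc (b (n + 1) ^ 2) (b n ^ 2), 1 / sqrtInterp b x
      = (b (n + 1) + b n) * log (b n / b (n + 1)) := by
  rw [setIntegral_congr_fun measurableSet_Ioc fun x hx => by
      rw [one_div, sqrtInterp_eq_sqrtSecant hb hpos (Ioc_subset_Icc_self hx)],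
    ← intervalIntegral.integral_of_le (pow_le_pow_left₀ (hpos _).le (hb n.le_succ) 2),
    integral_inv_sqrtSecant (hpos _) (hpos _)]

theorem not_integrableOn_one_div_sqrtInterp (hb : Antitone b) (hpos : ∀ n, 0 < b n) {c : ℝ}
    (hc : 0 < c) (hblock : ∀ n, c ≤ (b (n + 1) + b n) * log (b n / b (n + 1))) :
    ¬ IntegrableOn (fun x => 1 / sqrtInterp b x) (Ioc 0 (b 0 ^ 2)) := by
  have hsq : Antitone fun n => b n ^ 2 := fun m n hmn =>
    pow_le_pow_left₀ (hpos _).le (hb hmn) 2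
  refine not_integrableOn_of_le_setIntegral hc (fun n => measurableSet_Ioc)
    (by simpa using hsq.pairwise_disjoint_on_Ioc_succ) (fun n => ?_) fun n => ?_
  · exact Ioc_subset_Ioc (sq_nonneg _) (hsq n.zero_le)
  · rw [setIntegral_one_div_sqrtInterp hb hpos]
    exact hblock n

end sqrtInterp

noncomputable def logStepSeq : ℕ → ℝ
  | 0 => 1
  | n + 1 => logStepSeq n * exp (-(logStepSeq n)⁻¹)

theorem logStepSeq_pos (n : ℕ) : 0 < logStepSeq n := by
  induction n with
  | zero => simp [logStepSeq]
  | succ n ih => rw [logStepSeq]; positivity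

theorem logStepSeq_succ_le (n : ℕ) : logStepSeq (n + 1) ≤ logStepSeq n := by
  rw [logStepSeq]
  exact mul_le_of_le_one_right (logStepSeq_pos n).le
    (exp_le_one_iff.mpr (neg_nonpos.mpr (inv_pos.mpr (logStepSeq_pos n)).le))

theorem antitone_logStepSeq : Antitone logStepSeq :=
  antitone_nat_of_succ_le logStepSeq_succ_le

theorem logStepSeq_le_exp_neg (n : ℕ) : logStepSeq n ≤ exp (-n) := by
  induction n with
  | zero => simp [logStepSeq]
  | succ n ih =>
    have hpos := logStepSeq_pos n
    have hle_one : logStepSeq n ≤ 1 := ih.trans (exp_le_one_iff.mpr (by simp))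
    have hstep : exp (-(logStepSeq n)⁻¹) ≤ exp (-1) :=
      exp_le_exp.mpr (neg_le_neg (one_le_inv₀ hpos |>.mpr hle_one))
    calc logStepSeq (n + 1) = logStepSeq n * exp (-(logStepSeq n)⁻¹) := rfl
      _ ≤ exp (-n) * exp (-1) := mul_le_mul ih hstep (exp_pos _).le (exp_pos _).le
      _ = exp (-↑(n + 1)) := by rw [← exp_add]; push_cast; ring_nf

theorem tendsto_logStepSeq : Tendsto logStepSeq atTop (𝓝 0) :=
  tendsto_of_tendsto_of_tendsto_of_le_of_le tendsto_const_nhds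
    (tendsto_exp_neg_atTop_nhds_zero.comp tendsto_natCast_atTop_atTop)
    (fun n => (logStepSeq_pos n).le) logStepSeq_le_exp_neg

theorem log_logStepSeq_div_succ (n : ℕ) :
    log (logStepSeq n / logStepSeq (n + 1)) = (logStepSeq n)⁻¹ := by
  have hpos := logStepSeq_pos n
  rw [logStepSeq, div_mul_cancel_left₀ hpos.ne', ← exp_neg, neg_neg, log_exp]

/-- There exists a nondecreasing, continuous, concave `ρ : [0,∞) → [0,∞)` with
`ρ 0 = 0` and `∫_0^1 dx/ρ(x) = ∞` (non-integrability of `1/ρ` on `(0,1]`),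
such that `limsup_{x↓0} ρ(x)/√x = 1` (in particular
`limsup_{x↓0} ρ(x²)/x > 0`). -/
theorem exists_rho_failing_A4 :
    ∃ ρ : ℝ → ℝ,
      MonotoneOn ρ (Ici (0 : ℝ)) ∧
      ContinuousOn ρ (Ici (0 : ℝ)) ∧
      ConcaveOn ℝ (Ici (0 : ℝ)) ρ ∧
      (∀ x ∈ Ici (0 : ℝ), 0 ≤ ρ x) ∧
      ρ 0 = 0 ∧
      ¬ IntegrableOn (fun x => 1 / ρ x) (Ioc (0 : ℝ) 1) ∧
      limsup (fun x => ρ x / Real.sqrt x) (nhdsWithin 0 (Ioi (0 : ℝ))) = 1 := by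
  have hb := antitone_logStepSeq
  have hpos := logStepSeq_pos
  have hlim := tendsto_logStepSeq
  have hblock (n : ℕ) :
      1 ≤ (logStepSeq (n + 1) + logStepSeq n) * log (logStepSeq n / logStepSeq (n + 1)) := by
    rw [log_logStepSeq_div_succ, add_mul, mul_inv_cancel₀ (hpos n).ne']
    exact le_add_of_nonneg_left (mul_nonneg (hpos _).le (inv_pos.mpr (hpos n)).le)
  have hnonint := not_integrableOn_one_div_sqrtInterp hb hpos one_pos hblock
  rw [show logStepSeq 0 ^ 2 = 1 by simp [logStepSeq]] at hnonint
  exact ⟨sqrtInterp logStepSeq, monotoneOn_sqrtInterp hpos, continuousOn_sqrtInterp hb hpos hlim,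
    concaveOn_sqrtInterp hpos, fun _ hx => sqrtInterp_nonneg hpos hx, sqrtInterp_zero hpos hlim,
    hnonint, limsup_sqrtInterp_div_sqrt hb hpos hlim⟩
end
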